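/- arXiv:1612.08281 — 5 statements merged into one kernel-verified Lean document; each statement's English description precedes it below -/
import Mathlib

section
/- The harmonic product h₁ ∗ h₂ := (h₁h₂)₀, where (·)₀ denotes the harmonic (degree-preserving top) component in the harmonic decomposition of the ordinary product, is commutative and associative on harmonic polynomials: (h₁ ∗ h₂) ∗ h₃ = h₁ ∗ (h₂ ∗ h₃). -/
/-!
For the Fischer pairing `⟨p, r⟩ = ∑ₘ m! pₘ rₘ`, which is positive definite, multiplication by `Xᵢ`
is adjoint to `∂ᵢ`; hence multiplication by `q` is adjoint to the Laplacian. A harmonic multiple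
`q g` therefore satisfies `⟨q g, q g⟩ = ⟨g, Δ(q g)⟩ = 0`, so `q g = 0`: a polynomial has at most
one harmonic representative modulo `q`. Now `h₁ ∗ h₂` and `h₂ ∗ h₁` are both harmonic
representatives of `h₁h₂`, and `(h₁ ∗ h₂) ∗ h₃` and `h₁ ∗ (h₂ ∗ h₃)` are both harmonic
representatives of `h₁h₂h₃`.
-/

open MvPolynomial

/-- The quadratic form `q(x,y,z) = x² + y² + z²`. -/
noncomputable def qForm : MvPolynomial (Fin 3) ℝ := ∑ i : Fin 3, X i ^ 2

/-- The Laplacian of a polynomial on `ℝ³`. -/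
noncomputable def lap (p : MvPolynomial (Fin 3) ℝ) : MvPolynomial (Fin 3) ℝ :=
  ∑ i : Fin 3, pderiv i (pderiv i p)

/-- A polynomial is harmonic if its Laplacian vanishes. -/
def Harmonic (p : MvPolynomial (Fin 3) ℝ) : Prop := lap p = 0

/-- `star` is a harmonic product: `star h₁ h₂` is the harmonic projection `(h₁h₂)₀`
of the ordinary product, i.e. it is harmonic and differs from `h₁h₂` by a multiple of `q`. -/
def IsHarmonicProduct (star : MvPolynomial (Fin 3) ℝ → MvPolynomial (Fin 3) ℝ →
    MvPolynomial (Fin 3) ℝ) : Prop :=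
  ∀ h₁ h₂, Harmonic h₁ → Harmonic h₂ →
    Harmonic (star h₁ h₂) ∧ ∃ g, h₁ * h₂ - star h₁ h₂ = qForm * g

namespace MvPolynomial

variable {σ R : Type*} [Fintype σ]

noncomputable def multiFactorial [CommSemiring R] (m : σ →₀ ℕ) : R := ∏ j, ((m j).factorial : R)

theorem multiFactorial_add_single [CommSemiring R] [DecidableEq σ] (m : σ →₀ ℕ) (i : σ) :
    multiFactorial (m + Finsupp.single i 1) = multiFactorial (R := R) m * ((m i : R) + 1) := by
  have hrest : ∀ j ∈ ({i}ᶜ : Finset σ),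
      (((m + Finsupp.single i 1 : σ →₀ ℕ) j).factorial : R) = (m j).factorial := fun j hj => by
    simp [Finsupp.single_eq_of_ne (by simpa using hj : j ≠ i)]
  rw [multiFactorial, multiFactorial, Fintype.prod_eq_mul_prod_compl i,
    Fintype.prod_eq_mul_prod_compl i, Finset.prod_congr rfl hrest]
  simp only [Finsupp.coe_add, Pi.add_apply, Finsupp.single_eq_same, Nat.factorial_succ,
    Nat.cast_mul, Nat.cast_add, Nat.cast_one]
  ring

noncomputable def fischer [CommSemiring R] (p r : MvPolynomial σ R) : R :=
  ∑ m ∈ p.support, coeff m p * coeff m r * multiFactorial m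

section CommSemiring

variable [CommSemiring R]

theorem fischer_eq_sum_of_support_subset {p : MvPolynomial σ R} (r : MvPolynomial σ R)
    {s : Finset (σ →₀ ℕ)} (hs : p.support ⊆ s) :
    fischer p r = ∑ m ∈ s, coeff m p * coeff m r * multiFactorial m :=
  Finset.sum_subset hs fun m _ hm => by simp [notMem_support_iff.mp hm]

theorem fischer_sum_left {ι : Type*} (s : Finset ι) (p : ι → MvPolynomial σ R)
    (r : MvPolynomial σ R) : fischer (∑ k ∈ s, p k) r = ∑ k ∈ s, fischer (p k) r := by
  classical
  have hsub : ∀ k ∈ s, (p k).support ⊆ s.biUnion fun k => (p k).support :=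
    fun k hk => Finset.subset_biUnion_of_mem (fun k => (p k).support) hk
  rw [fischer_eq_sum_of_support_subset r support_sum,
    Finset.sum_congr rfl fun k hk => fischer_eq_sum_of_support_subset r (hsub k hk),
    Finset.sum_comm]
  simp only [coeff_sum, Finset.sum_mul]

theorem fischer_sum_right {ι : Type*} (s : Finset ι) (p : MvPolynomial σ R)
    (r : ι → MvPolynomial σ R) : fischer p (∑ k ∈ s, r k) = ∑ k ∈ s, fischer p (r k) := by
  simp only [fischer, coeff_sum, Finset.mul_sum, Finset.sum_mul]
  exact Finset.sum_comm

theorem fischer_mul_X (p r : MvPolynomial σ R) (i : σ) :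
    fischer (p * X i) r = fischer p (pderiv i r) := by
  classical
  rw [fischer, support_mul_X, Finset.sum_map, fischer]
  refine Finset.sum_congr rfl fun m _ => ?_
  simp only [addRightEmbedding_apply, coeff_mul_X, multiFactorial_add_single, coeff_pderiv]
  ring

end CommSemiring

theorem eq_zero_of_fischer_self_eq_zero [CommRing R] [LinearOrder R] [IsStrictOrderedRing R]
    {p : MvPolynomial σ R} (h : fischer p p = 0) : p = 0 := by
  contrapose! h
  obtain ⟨m, hm⟩ := support_nonempty.mpr h
  refine (Finset.sum_pos' (fun n _ => mul_nonneg (mul_self_nonneg _) ?_) ⟨m, hm, ?_⟩).ne'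
  · exact Finset.prod_nonneg fun j _ => Nat.cast_nonneg _
  · exact mul_pos (mul_self_pos.mpr (mem_support_iff.mp hm))
      (Finset.prod_pos fun j _ => Nat.cast_pos.mpr (Nat.factorial_pos _))

end MvPolynomial

theorem fischer_qForm_mul (g h : MvPolynomial (Fin 3) ℝ) :
    fischer (qForm * g) h = fischer g (lap h) := by
  simp only [qForm, lap, Finset.sum_mul, fischer_sum_left, fischer_sum_right]
  refine Finset.sum_congr rfl fun i _ => ?_
  rw [sq, mul_comm, ← mul_assoc, fischer_mul_X, fischer_mul_X]

theorem lap_sub (p r : MvPolynomial (Fin 3) ℝ) : lap (p - r) = lap p - lap r := by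
  simp only [lap, map_sub, Finset.sum_sub_distrib]

theorem Harmonic.qForm_mul_eq_zero {g : MvPolynomial (Fin 3) ℝ} (hg : Harmonic (qForm * g)) :
    qForm * g = 0 :=
  eq_zero_of_fischer_self_eq_zero <| by
    rw [fischer_qForm_mul, show lap (qForm * g) = 0 from hg]
    simp [fischer]

theorem Harmonic.eq_of_sub_eq_qForm_mul {h₁ h₂ g : MvPolynomial (Fin 3) ℝ} (H₁ : Harmonic h₁)
    (H₂ : Harmonic h₂) (hg : h₁ - h₂ = qForm * g) : h₁ = h₂ := by
  have hq : Harmonic (qForm * g) := by rw [Harmonic, ← hg, lap_sub, H₁, H₂, sub_zero]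
  rwa [hq.qForm_mul_eq_zero, sub_eq_zero] at hg

theorem IsHarmonicProduct.eq_of_harmonic {star : MvPolynomial (Fin 3) ℝ →
    MvPolynomial (Fin 3) ℝ → MvPolynomial (Fin 3) ℝ} (hstar : IsHarmonicProduct star)
    {h₁ h₂ k : MvPolynomial (Fin 3) ℝ} (H₁ : Harmonic h₁) (H₂ : Harmonic h₂) (hk : Harmonic k)
    (hdvd : qForm ∣ h₁ * h₂ - k) : star h₁ h₂ = k := by
  obtain ⟨hs, g, hg⟩ := hstar h₁ h₂ H₁ H₂
  obtain ⟨g', hg'⟩ := hdvd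
  exact hs.eq_of_sub_eq_qForm_mul hk (g := g' - g) (by linear_combination hg' - hg)

/-- **The harmonic product is commutative and associative** on harmonic polynomials. -/
theorem harmonicProduct_comm_assoc
    (star : MvPolynomial (Fin 3) ℝ → MvPolynomial (Fin 3) ℝ → MvPolynomial (Fin 3) ℝ)
    (hstar : IsHarmonicProduct star) :
    ∀ h₁ h₂ h₃ : MvPolynomial (Fin 3) ℝ, Harmonic h₁ → Harmonic h₂ → Harmonic h₃ →
      star h₁ h₂ = star h₂ h₁ ∧ star (star h₁ h₂) h₃ = star h₁ (star h₂ h₃) := by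
  intro h₁ h₂ h₃ H₁ H₂ H₃
  obtain ⟨H₂₁, g₂₁, e₂₁⟩ := hstar h₂ h₁ H₂ H₁
  obtain ⟨H₁₂, g₁₂, e₁₂⟩ := hstar h₁ h₂ H₁ H₂
  obtain ⟨H₂₃, g₂₃, e₂₃⟩ := hstar h₂ h₃ H₂ H₃
  obtain ⟨H₁₂₃, g₁₂₃, e₁₂₃⟩ := hstar h₁ (star h₂ h₃) H₁ H₂₃
  refine ⟨hstar.eq_of_harmonic H₁ H₂ H₂₁ ⟨g₂₁, by linear_combination e₂₁⟩,
    hstar.eq_of_harmonic H₁₂ H₃ H₁₂₃ ⟨g₁₂₃ + h₁ * g₂₃ - g₁₂ * h₃, ?_⟩⟩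
  linear_combination e₁₂₃ + h₁ * e₂₃ - h₃ * e₁₂
end

section
/- Root characterization of real-type binary forms: a complex binary form f of degree 2n lies in the real subspace S_ℝ^{2n} (i.e. satisfies f̄(−v,u) = (−1)ⁿ f(u,v)) if and only if f(u,v) = α·uʳvʳ·∏_{i=1}^{n−r}(u − λᵢv)(λ̄ᵢu + v) for some 0 ≤ r ≤ n, nonzero complex numbers λ₁,...,λ_{n−r}, and a real number α. -/
open MvPolynomial

/-- A binary form `f` of degree `2n` is of real type (`f ∈ S_ℝ^{2n}`) if
`conj(f)(−v, u) = (−1)ⁿ f(u, v)`, where `conj(f)` is `f` with conjugated coefficients. -/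
def RealType (n : ℕ) (f : MvPolynomial (Fin 2) ℂ) : Prop :=
  MvPolynomial.aeval ![-(X 1), X 0] (MvPolynomial.map (starRingEnd ℂ) f) =
    ((-1 : MvPolynomial (Fin 2) ℂ) ^ n) * f

noncomputable section RealTypeAux

/-- The conjugation-rotation operator. -/
def Sop : MvPolynomial (Fin 2) ℂ →+* MvPolynomial (Fin 2) ℂ :=
  ((aeval ![-X 1, X 0]).toRingHom : MvPolynomial (Fin 2) ℂ →+* MvPolynomial (Fin 2) ℂ).comp
    (MvPolynomial.map (starRingEnd ℂ))

@[simp] lemma Sop_C (c : ℂ) : Sop (C c) = C (starRingEnd ℂ c) := by simp [Sop]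
@[simp] lemma Sop_X0 : Sop (X 0) = -X 1 := by simp [Sop]
@[simp] lemma Sop_X1 : Sop (X 1) = X 0 := by simp [Sop]

lemma realType_iff_Sop (n : ℕ) (f : MvPolynomial (Fin 2) ℂ) :
    RealType n f ↔ Sop f = (-1) ^ n * f := Iff.rfl

lemma aeval_C_comp (x : Fin 2 → ℂ) (f : MvPolynomial (Fin 2) ℂ) :
    aeval (fun i => (C (x i) : MvPolynomial (Fin 1) ℂ)) f = C (eval x f) := by
  have h : (C : ℂ →+* MvPolynomial (Fin 1) ℂ).comp (eval x) =
      ((aeval (fun i => (C (x i) : MvPolynomial (Fin 1) ℂ))).toRingHom :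
        MvPolynomial (Fin 2) ℂ →+* MvPolynomial (Fin 1) ℂ) := by
    apply MvPolynomial.ringHom_ext <;> simp
  exact (congrFun (congrArg DFunLike.coe h) f).symm

lemma scaling {A : Type*} [CommSemiring A] [Algebra ℂ A] {f : MvPolynomial (Fin 2) ℂ} {d : ℕ}
    (hf : f.IsHomogeneous d) (t : A) (g : Fin 2 → A) :
    aeval (fun i => t * g i) f = t ^ d * aeval g f := by
  conv_lhs => rw [f.as_sum]
  conv_rhs => rw [f.as_sum]
  rw [map_sum, map_sum, Finset.mul_sum]
  refine Finset.sum_congr rfl fun m hm => ?_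
  rw [aeval_monomial, aeval_monomial]
  have hdeg : (m.sum fun _ e => e) = d := by
    have := hf (mem_support_iff.mp hm)
    simpa [Finsupp.weight_apply, Finsupp.sum] using this
  have : (m.prod fun i e => (t * g i) ^ e) = t ^ d * m.prod fun i e => g i ^ e := by
    rw [← hdeg]
    simp_rw [mul_pow]
    rw [Finsupp.prod_mul]
    congr 1
    rw [Finsupp.prod, Finsupp.sum, Finset.prod_pow_eq_pow_sum]
  rw [this]; ring

lemma aeval_eq_eval' (x : Fin 2 → ℂ) (f : MvPolynomial (Fin 2) ℂ) : aeval x f = eval x f := by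
  rw [aeval_def, Algebra.algebraMap_self, eval]; rfl

lemma eval_scaling {f : MvPolynomial (Fin 2) ℂ} {d : ℕ} (hf : f.IsHomogeneous d)
    (t : ℂ) (x : Fin 2 → ℂ) : eval (fun i => t * x i) f = t ^ d * eval x f := by
  rw [← aeval_eq_eval', ← aeval_eq_eval', scaling hf]

lemma aeval_lin (l : ℂ) (f : MvPolynomial (Fin 2) ℂ) {d : ℕ} (hf : f.IsHomogeneous d) :
    aeval ![(C l * X 0 : MvPolynomial (Fin 1) ℂ), X 0] f = C (eval ![l, 1] f) * X 0 ^ d := by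
  have h1 : ![(C l * X 0 : MvPolynomial (Fin 1) ℂ), X 0] =
      fun i => X 0 * (fun j => (C (![l, 1] j) : MvPolynomial (Fin 1) ℂ)) i := by
    funext i; fin_cases i <;> simp [mul_comm]
  rw [h1, scaling hf, aeval_C_comp]; ring

lemma dvd_crit1 {f : MvPolynomial (Fin 2) ℂ} {d : ℕ} (hf : f.IsHomogeneous d) (l : ℂ) :
    (X 0 - C l * X 1) ∣ f ↔ eval ![l, 1] f = 0 := by
  have hX1 : (X 1 : MvPolynomial (Fin 2) ℂ) = X (0 : Fin 1).succ := rfl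
  have hXs : finSuccEquiv ℂ 1 (X (1 : Fin 2)) = Polynomial.C (X 0) := by
    rw [hX1]; exact finSuccEquiv_X_succ
  have hlin : finSuccEquiv ℂ 1 (X 0 - C l * X 1) =
      Polynomial.X - Polynomial.C (C l * X 0) := by
    have hC : finSuccEquiv ℂ 1 (C l) = Polynomial.C (C l) := by
      rw [← MvPolynomial.algebraMap_eq, AlgEquiv.commutes]
      simp [Polynomial.algebraMap_eq, MvPolynomial.algebraMap_eq]
    simp [map_sub, map_mul, finSuccEquiv_X_zero, hXs, hC]
  have hdvd : (X 0 - C l * X 1) ∣ f ↔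
      (Polynomial.X - Polynomial.C (C l * X 0)) ∣ finSuccEquiv ℂ 1 f := by
    rw [← hlin]
    exact (map_dvd_iff (finSuccEquiv ℂ 1).toMulEquiv).symm
  rw [hdvd, Polynomial.dvd_iff_isRoot]
  have heval : Polynomial.eval (C l * X 0) (finSuccEquiv ℂ 1 f) =
      aeval ![(C l * X 0 : MvPolynomial (Fin 1) ℂ), X 0] f := by
    have hC : ∀ c : ℂ, finSuccEquiv ℂ 1 (C c) = Polynomial.C (C c) := by
      intro c
      rw [← MvPolynomial.algebraMap_eq, AlgEquiv.commutes]
      simp [Polynomial.algebraMap_eq, MvPolynomial.algebraMap_eq]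
    have h : ((Polynomial.aeval (C l * X 0 : MvPolynomial (Fin 1) ℂ)).toRingHom).comp
        ((finSuccEquiv ℂ 1 : MvPolynomial (Fin 2) ℂ ≃ₐ[ℂ] Polynomial (MvPolynomial (Fin 1) ℂ)) :
          MvPolynomial (Fin 2) ℂ →+* Polynomial (MvPolynomial (Fin 1) ℂ)) =
        ((aeval ![(C l * X 0 : MvPolynomial (Fin 1) ℂ), X 0]).toRingHom :
          MvPolynomial (Fin 2) ℂ →+* MvPolynomial (Fin 1) ℂ) := by
      apply MvPolynomial.ringHom_ext
      · intro c
        simp [hC c, MvPolynomial.algebraMap_eq]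
      · intro i
        fin_cases i <;>
          simp [finSuccEquiv_X_zero, hXs]
    have := congrFun (congrArg DFunLike.coe h) f
    simpa using this
  rw [Polynomial.IsRoot.def, heval, aeval_lin l f hf]
  constructor
  · intro h
    rcases mul_eq_zero.mp h with h | h
    · simpa [MvPolynomial.C_eq_zero] using h
    · exact absurd h (pow_ne_zero _ (MvPolynomial.X_ne_zero _))
  · intro h; rw [h]; simp

def sw : MvPolynomial (Fin 2) ℂ →ₐ[ℂ] MvPolynomial (Fin 2) ℂ :=
  rename (⇑(Equiv.swap (0 : Fin 2) 1))

lemma swap_dvd_iff (p q : MvPolynomial (Fin 2) ℂ) : p ∣ q ↔ sw p ∣ sw q :=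
  (map_dvd_iff (renameEquiv ℂ (Equiv.swap (0 : Fin 2) 1)).toMulEquiv).symm

lemma dvd_crit2 {f : MvPolynomial (Fin 2) ℂ} {d : ℕ} (hf : f.IsHomogeneous d) (m : ℂ) :
    (C m * X 0 + X 1) ∣ f ↔ eval ![1, -m] f = 0 := by
  rw [swap_dvd_iff]
  have h1 : sw (C m * X 0 + X 1) = X 0 - C (-m) * X 1 := by
    show rename (⇑(Equiv.swap (0 : Fin 2) 1)) (C m * X 0 + X 1) = _
    simp only [map_add, map_mul, rename_C, rename_X, Equiv.swap_apply_left,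
      Equiv.swap_apply_right, map_neg]
    ring
  rw [show (sw f : MvPolynomial (Fin 2) ℂ) = rename (⇑(Equiv.swap (0 : Fin 2) 1)) f from rfl]
  rw [h1, dvd_crit1 hf.rename_isHomogeneous (-m), eval_rename]
  have h2 : (![-m, 1] ∘ ⇑(Equiv.swap (0 : Fin 2) 1)) = ![1, -m] := by
    funext i; fin_cases i <;> simp
  rw [h2]

lemma dvd_crit3 {f : MvPolynomial (Fin 2) ℂ} {d : ℕ} (hf : f.IsHomogeneous d) :
    (X 1 : MvPolynomial (Fin 2) ℂ) ∣ f ↔ eval ![1, 0] f = 0 := by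
  rw [swap_dvd_iff]
  have h1 : sw (X 1 : MvPolynomial (Fin 2) ℂ) = X 0 - C 0 * X 1 := by
    show rename (⇑(Equiv.swap (0 : Fin 2) 1)) (X 1 : MvPolynomial (Fin 2) ℂ) = _
    simp
  rw [show (sw f : MvPolynomial (Fin 2) ℂ) = rename (⇑(Equiv.swap (0 : Fin 2) 1)) f from rfl]
  rw [h1, dvd_crit1 hf.rename_isHomogeneous 0, eval_rename]
  have h2 : (![(0 : ℂ), 1] ∘ ⇑(Equiv.swap (0 : Fin 2) 1)) = ![1, 0] := by
    funext i; fin_cases i <;> simp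
  rw [h2]

lemma Sop_eval (p : Fin 2 → ℂ) (f : MvPolynomial (Fin 2) ℂ) :
    eval p (Sop f) = starRingEnd ℂ (eval ![-(starRingEnd ℂ (p 1)), starRingEnd ℂ (p 0)] f) := by
  have h : ((eval p).comp Sop : MvPolynomial (Fin 2) ℂ →+* ℂ) =
      (starRingEnd ℂ).comp (eval ![-(starRingEnd ℂ (p 1)), starRingEnd ℂ (p 0)]) := by
    apply MvPolynomial.ringHom_ext
    · intro c; simp
    · intro i; fin_cases i <;> simp
  exact congrFun (congrArg DFunLike.coe h) f

lemma dvd_of_dvd_sign {p f : MvPolynomial (Fin 2) ℂ} {k : ℕ}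
    (h : p ∣ (-1 : MvPolynomial (Fin 2) ℂ) ^ k * f) : p ∣ f := by
  have h2 : ((-1 : MvPolynomial (Fin 2) ℂ) ^ k) * ((-1 : MvPolynomial (Fin 2) ℂ) ^ k * f)
      = f := by
    rw [← mul_assoc, ← mul_pow, neg_mul_neg, one_mul, one_pow, one_mul]
  exact h2 ▸ h.mul_left _

lemma isHom_cancel {p g : MvPolynomial (Fin 2) ℂ} {e d : ℕ} (hp : p.IsHomogeneous e)
    (hpg : (p * g).IsHomogeneous d) (hp0 : p ≠ 0) (hed : e ≤ d) :
    g.IsHomogeneous (d - e) := by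
  by_cases hg : g = 0
  · subst hg; exact isHomogeneous_zero _ _ _
  have hfz : p * g ≠ 0 := mul_ne_zero hp0 hg
  have expand : p * g = ∑ i ∈ Finset.range (g.totalDegree + 1),
      p * homogeneousComponent i g := by
    rw [← Finset.mul_sum, sum_homogeneousComponent]
  have hcd : homogeneousComponent d (p * g) = p * g := by
    rw [homogeneousComponent_of_mem ((mem_homogeneousSubmodule _ _).mpr hpg), if_pos rfl]
  have hstep : homogeneousComponent d (p * g) =
      ∑ i ∈ Finset.range (g.totalDegree + 1),
        if i = d - e then p * homogeneousComponent i g else 0 := by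
    conv_lhs => rw [expand]
    rw [map_sum]
    refine Finset.sum_congr rfl fun i _ => ?_
    have hmem : p * homogeneousComponent i g ∈ homogeneousSubmodule (Fin 2) ℂ (e + i) :=
      (mem_homogeneousSubmodule _ _).mpr
        (hp.mul ((mem_homogeneousSubmodule _ _).mp (homogeneousComponent_mem i g)))
    rw [homogeneousComponent_of_mem hmem]
    congr 1
    simp only [eq_iff_iff]
    omega
  rw [hcd, Finset.sum_ite_eq' _ (d - e) _] at hstep
  by_cases hin : d - e ∈ Finset.range (g.totalDegree + 1)
  · rw [if_pos hin] at hstep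
    have hgeq : g = homogeneousComponent (d - e) g := mul_left_cancel₀ hp0 hstep
    rw [hgeq]
    exact (mem_homogeneousSubmodule _ _).mp (homogeneousComponent_mem _ g)
  · rw [if_neg hin] at hstep
    exact absurd hstep hfz

/-- The standard conjugate pair of linear factors. -/
def pair (l : ℂ) : MvPolynomial (Fin 2) ℂ :=
  (X 0 - C l * X 1) * (C (starRingEnd ℂ l) * X 0 + X 1)

lemma Sop_pair (l : ℂ) : Sop (pair l) = -pair l := by
  unfold pair
  rw [map_mul, map_sub, map_add, map_mul, map_mul, Sop_C, Sop_C, Sop_X0, Sop_X1]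
  rw [Complex.conj_conj]
  ring

lemma Sop_form (n r : ℕ) (hrn : r ≤ n) (lam : Fin (n - r) → ℂ) (α : ℝ) :
    Sop (C (α : ℂ) * X 0 ^ r * X 1 ^ r * ∏ i : Fin (n - r), pair (lam i)) =
      (-1) ^ n * (C (α : ℂ) * X 0 ^ r * X 1 ^ r * ∏ i : Fin (n - r), pair (lam i)) := by
  rw [map_mul, map_mul, map_mul, map_pow, map_pow, Sop_C, Sop_X0, Sop_X1,
    map_prod]
  simp_rw [Sop_pair]
  rw [Complex.conj_ofReal]
  have hneg : (∏ i : Fin (n - r), -pair (lam i))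
      = (-1 : MvPolynomial (Fin 2) ℂ) ^ (n - r) * ∏ i : Fin (n - r), pair (lam i) := by
    rw [Finset.prod_congr rfl (fun i _ => neg_eq_neg_one_mul (pair (lam i))),
      Finset.prod_mul_distrib, Finset.prod_const, Finset.card_univ, Fintype.card_fin]
  have hpow : ((-1 : MvPolynomial (Fin 2) ℂ)) ^ r * (-1) ^ (n - r) = (-1) ^ n := by
    rw [← pow_add]
    congr 1
    omega
  rw [hneg, neg_pow (X 1 : MvPolynomial (Fin 2) ℂ) r, ← hpow]
  ring

lemma fwd : ∀ (n : ℕ) (f : MvPolynomial (Fin 2) ℂ), f.IsHomogeneous (2 * n) →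
    Sop f = (-1) ^ n * f →
    ∃ r ≤ n, ∃ lam : Fin (n - r) → ℂ, (∀ i, lam i ≠ 0) ∧ ∃ α : ℝ,
      f = C (α : ℂ) * X 0 ^ r * X 1 ^ r * ∏ i : Fin (n - r), pair (lam i) := by
  intro n
  induction n with
  | zero =>
    intro f hf hrt
    have hfC : f = C (coeff 0 f) := by
      ext m
      by_cases hm : m = 0
      · subst hm; simp
      · rw [coeff_C, if_neg (fun h => hm h.symm)]
        exact hf.coeff_eq_zero (by simpa [Finsupp.degree_eq_zero_iff] using hm)
    rw [hfC] at hrt ⊢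
    rw [Sop_C, pow_zero, one_mul] at hrt
    have hconj : starRingEnd ℂ (coeff 0 f) = coeff 0 f := by
      have := hrt
      exact MvPolynomial.C_injective _ _ this
    obtain ⟨α, hα⟩ : ∃ α : ℝ, (α : ℂ) = coeff 0 f :=
      ⟨(coeff 0 f).re, by simpa [Complex.conj_eq_iff_re] using hconj⟩
    exact ⟨0, le_refl 0, fun i => i.elim0, fun i => i.elim0, α, by simp [hα]⟩
  | succ n IH =>
    intro f hf hrt
    by_cases h0 : f = 0
    · refine ⟨n + 1, le_refl _, fun i => (by simpa using i : Fin 0).elim0,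
        fun i => (by simpa using i : Fin 0).elim0, 0, ?_⟩
      simp [h0]
    -- the key evaluation relation
    have hkey : (-1 : ℂ) ^ (n + 1) * eval ![0, 1] f = starRingEnd ℂ (eval ![1, 0] f) := by
      have h1 : eval ![(0 : ℂ), 1] (Sop f)
          = starRingEnd ℂ (eval ![(-1 : ℂ), 0] f) := by
        have := Sop_eval ![(0 : ℂ), 1] f
        simpa using this
      have h2 : eval ![(-1 : ℂ), 0] f = eval ![1, 0] f := by
        have hv : ![(-1 : ℂ), 0] = fun i => (-1 : ℂ) * ![1, 0] i := by
          funext i; fin_cases i <;> simp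
        rw [hv, eval_scaling hf]
        rw [show ((-1 : ℂ)) ^ (2 * (n + 1)) = 1 by rw [pow_mul]; norm_num]
        rw [one_mul]
      rw [hrt] at h1
      rw [map_mul] at h1
      rw [show eval ![(0:ℂ), 1] ((-1 : MvPolynomial (Fin 2) ℂ) ^ (n+1)) = (-1 : ℂ) ^ (n+1) by
        rw [map_pow, map_neg, map_one]] at h1
      rw [h1, h2]
    by_cases hinf : eval ![(1 : ℂ), 0] f = 0
    · -- Case A : f = X0 * X1 * g
      have hc0 : eval ![(0 : ℂ), 1] f = 0 := by
        rw [hinf, map_zero] at hkey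
        have hne : ((-1 : ℂ)) ^ (n + 1) ≠ 0 := pow_ne_zero _ (by norm_num)
        exact (mul_eq_zero.mp hkey).resolve_left hne
      obtain ⟨g1, hg1⟩ := (dvd_crit3 hf).mpr hinf
      have hg1hom : g1.IsHomogeneous (2 * (n + 1) - 1) :=
        isHom_cancel (isHomogeneous_X _ _) (hg1 ▸ hf) (X_ne_zero _) (by omega)
      have hevg1 : eval ![(0 : ℂ), 1] g1 = 0 := by
        rw [hg1, map_mul] at hc0
        simpa using hc0
      have hX0g1 : X 0 ∣ g1 := by
        have h := (dvd_crit1 hg1hom 0).mpr (by simpa using hevg1)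
        simpa using h
      obtain ⟨g, hg⟩ := hX0g1
      have hfg : f = X 0 * X 1 * g := by rw [hg1, hg]; ring
      have hXX : (X 0 * X 1 : MvPolynomial (Fin 2) ℂ).IsHomogeneous 2 :=
        (isHomogeneous_X ℂ (0 : Fin 2)).mul (isHomogeneous_X ℂ (1 : Fin 2))
      have hXXne : (X 0 * X 1 : MvPolynomial (Fin 2) ℂ) ≠ 0 :=
        mul_ne_zero (X_ne_zero _) (X_ne_zero _)
      have hghom : g.IsHomogeneous (2 * n) := by
        have := isHom_cancel hXX (hfg ▸ hf) hXXne (by omega)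
        rwa [show 2 * (n + 1) - 2 = 2 * n from by omega] at this
      have hrtg : Sop g = (-1) ^ n * g := by
        have heq := hrt
        rw [hfg, map_mul, map_mul, Sop_X0, Sop_X1] at heq
        apply mul_left_cancel₀ hXXne
        rw [pow_succ] at heq
        linear_combination -heq
      obtain ⟨r', hr'n, lam', hlam', α, hgform⟩ := IH g hghom hrtg
      have hcast : n + 1 - (r' + 1) = n - r' := by omega
      refine ⟨r' + 1, by omega, fun i => lam' (Fin.cast hcast i),
        fun i => hlam' _, α, ?_⟩
      have hprod : (∏ i : Fin (n + 1 - (r' + 1)), pair (lam' (Fin.cast hcast i)))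
          = ∏ i : Fin (n - r'), pair (lam' i) :=
        Fintype.prod_equiv (finCongr hcast) _ _ (fun i => rfl)
      rw [hfg, hgform, hprod, pow_succ, pow_succ]
      ring
    · -- Case B : conjugate pair of roots
      have hc0 : eval ![(0 : ℂ), 1] f ≠ 0 := by
        intro h
        rw [h, mul_zero] at hkey
        exact hinf (by simpa using hkey.symm)
      set P : Polynomial ℂ := aeval ![Polynomial.X, (1 : Polynomial ℂ)] f with hP
      have hPev : ∀ z : ℂ, Polynomial.eval z P = eval ![z, 1] f := by
        intro z
        have h : (Polynomial.evalRingHom z).comp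
            ((aeval ![Polynomial.X, (1 : Polynomial ℂ)]).toRingHom :
              MvPolynomial (Fin 2) ℂ →+* Polynomial ℂ) =
            (eval ![z, 1] : MvPolynomial (Fin 2) ℂ →+* ℂ) := by
          apply MvPolynomial.ringHom_ext
          · intro c; simp
          · intro i; fin_cases i <;> simp
        exact congrFun (congrArg DFunLike.coe h) f
      have hP0 : Polynomial.eval 0 P ≠ 0 := by rw [hPev]; exact hc0
      have hPne : P ≠ 0 := fun h => hP0 (by simp [h])
      have hdegpos : 0 < P.natDegree := by
        by_contra hd
        push_neg at hd
        have hPc : P = Polynomial.C (Polynomial.coeff P 0) :=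
          Polynomial.eq_C_of_natDegree_le_zero hd
        have hall : ∀ z : ℂ, eval ![z, 1] f = eval ![(0 : ℂ), 1] f := by
          intro z
          rw [← hPev z, ← hPev 0]
          conv_lhs => rw [hPc]
          conv_rhs => rw [hPc]
          simp
        set c := eval ![(0 : ℂ), 1] f with hc
        have hzero : X 1 * (f - C c * X 1 ^ (2 * (n + 1))) = 0 := by
          apply MvPolynomial.funext
          intro x
          rw [map_mul, map_sub, map_mul, map_pow, eval_X, eval_C, map_zero]
          by_cases hx1 : x 1 = 0
          · rw [hx1]; ring
          · have hx : x = fun i => x 1 * ![x 0 / x 1, 1] i := by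
              funext i
              fin_cases i
              · show x 0 = x 1 * (x 0 / x 1)
                field_simp
              · show x 1 = x 1 * 1
                ring
            have hevx : eval x f = (x 1) ^ (2 * (n + 1)) * c := by
              conv_lhs => rw [hx]
              rw [eval_scaling hf, hall]
            rw [hevx]
            ring
        have hfc : f = C c * X 1 ^ (2 * (n + 1)) :=
          sub_eq_zero.mp ((mul_eq_zero.mp hzero).resolve_left (X_ne_zero _))
        apply hinf
        rw [hfc, map_mul, map_pow, eval_C]
        have hX10 : (eval ![(1 : ℂ), 0]) (X 1) = 0 := by simp
        rw [hX10, zero_pow (by omega), mul_zero]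
      obtain ⟨lam, hroot⟩ := Complex.exists_root
        (Polynomial.natDegree_pos_iff_degree_pos.mp hdegpos)
      have hlam0 : lam ≠ 0 := by
        intro h; subst h; exact hP0 hroot
      have hroot1 : eval ![lam, 1] f = 0 := by rw [← hPev]; exact hroot
      obtain ⟨g1, hg1⟩ := (dvd_crit1 hf lam).mpr hroot1
      have hl1hom : (X 0 - C lam * X 1 : MvPolynomial (Fin 2) ℂ).IsHomogeneous 1 :=
        (isHomogeneous_X ℂ (0 : Fin 2)).sub ((isHomogeneous_X ℂ (1 : Fin 2)).C_mul lam)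
      have hl1ne : (X 0 - C lam * X 1 : MvPolynomial (Fin 2) ℂ) ≠ 0 := by
        intro h
        have := congrArg (eval ![(1 : ℂ), 0]) h
        simp at this
      have hg1hom : g1.IsHomogeneous (2 * (n + 1) - 1) :=
        isHom_cancel hl1hom (hg1 ▸ hf) hl1ne (by omega)
      -- the conjugate root
      have hSl1 : Sop (X 0 - C lam * X 1) =
          -(C (starRingEnd ℂ lam) * X 0 + X 1) := by
        rw [map_sub, map_mul, Sop_C, Sop_X0, Sop_X1]; ring
      have hl2f : (C (starRingEnd ℂ lam) * X 0 + X 1) ∣ f := by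
        apply dvd_of_dvd_sign (k := n + 1)
        rw [← hrt, hg1, map_mul, hSl1]
        exact dvd_mul_of_dvd_left (dvd_neg.mpr dvd_rfl) _
      have hev2 : eval ![(1 : ℂ), -(starRingEnd ℂ lam)] f = 0 :=
        (dvd_crit2 hf (starRingEnd ℂ lam)).mp hl2f
      have hevl1 : eval ![(1 : ℂ), -(starRingEnd ℂ lam)] (X 0 - C lam * X 1)
          = 1 + lam * starRingEnd ℂ lam := by
        simp
      have hl1ev_ne : (1 : ℂ) + lam * starRingEnd ℂ lam ≠ 0 := by
        rw [Complex.mul_conj]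
        intro h
        have := congrArg Complex.re h
        simp at this
        nlinarith [Complex.normSq_nonneg lam]
      have hevg1 : eval ![(1 : ℂ), -(starRingEnd ℂ lam)] g1 = 0 := by
        rw [hg1, map_mul, hevl1] at hev2
        exact (mul_eq_zero.mp hev2).resolve_left hl1ev_ne
      obtain ⟨g, hg⟩ := (dvd_crit2 hg1hom (starRingEnd ℂ lam)).mpr hevg1
      have hfg : f = pair lam * g := by rw [hg1, hg, pair]; ring
      have hl2hom : (C (starRingEnd ℂ lam) * X 0 + X 1 :
          MvPolynomial (Fin 2) ℂ).IsHomogeneous 1 :=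
        ((isHomogeneous_X ℂ (0 : Fin 2)).C_mul _).add (isHomogeneous_X ℂ (1 : Fin 2))
      have hl2ne : (C (starRingEnd ℂ lam) * X 0 + X 1 : MvPolynomial (Fin 2) ℂ) ≠ 0 := by
        intro h
        have := congrArg (eval ![(0 : ℂ), 1]) h
        simp at this
      have hpairhom : (pair lam).IsHomogeneous 2 := hl1hom.mul hl2hom
      have hpairne : pair lam ≠ 0 := mul_ne_zero hl1ne hl2ne
      have hghom : g.IsHomogeneous (2 * n) := by
        have := isHom_cancel hpairhom (hfg ▸ hf) hpairne (by omega)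
        rwa [show 2 * (n + 1) - 2 = 2 * n from by omega] at this
      have hrtg : Sop g = (-1) ^ n * g := by
        have heq := hrt
        rw [hfg, map_mul, Sop_pair] at heq
        apply mul_left_cancel₀ hpairne
        rw [pow_succ] at heq
        linear_combination -heq
      obtain ⟨r', hr'n, lam', hlam', α, hgform⟩ := IH g hghom hrtg
      have hcast : n + 1 - r' = (n - r') + 1 := by omega
      refine ⟨r', by omega, fun i => (Fin.cons lam lam' : Fin (n - r' + 1) → ℂ) (Fin.cast hcast i), ?_, α, ?_⟩
      · intro i
        show (Fin.cons lam lam' : Fin (n - r' + 1) → ℂ) (Fin.cast hcast i) ≠ 0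
        generalize Fin.cast hcast i = j
        induction j using Fin.cases with
        | zero => simpa using hlam0
        | succ j => simpa using hlam' j
      · have hprod : (∏ i : Fin (n + 1 - r'), pair ((Fin.cons lam lam' : Fin (n - r' + 1) → ℂ) (Fin.cast hcast i)))
            = pair lam * ∏ i : Fin (n - r'), pair (lam' i) := by
          rw [Fintype.prod_equiv (finCongr hcast)
            (fun i => pair ((Fin.cons lam lam' : Fin (n - r' + 1) → ℂ) (Fin.cast hcast i)))
            (fun j => pair ((Fin.cons lam lam' : Fin (n - r' + 1) → ℂ) j)) (fun i => rfl)]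
          rw [Fin.prod_univ_succ]
          simp
        rw [hfg, hgform, hprod]
        ring

/-- **Root characterization of real-type binary forms**: a binary form `f` of degree `2n`
lies in `S_ℝ^{2n}` iff `f(u,v) = α uʳ vʳ ∏ᵢ (u − λᵢ v)(λ̄ᵢ u + v)` for some `0 ≤ r ≤ n`,
nonzero complex numbers `λ₁, …, λ_{n−r}` and a real number `α`. -/
theorem realType_root_characterization (n : ℕ) (f : MvPolynomial (Fin 2) ℂ)
    (hf : f.IsHomogeneous (2 * n)) :
    RealType n f ↔
      ∃ r ≤ n, ∃ lam : Fin (n - r) → ℂ, (∀ i, lam i ≠ 0) ∧ ∃ α : ℝ,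
        f = C (α : ℂ) * X 0 ^ r * X 1 ^ r *
          ∏ i : Fin (n - r),
            ((X 0 - C (lam i) * X 1) * (C (starRingEnd ℂ (lam i)) * X 0 + X 1)) := by
  rw [realType_iff_Sop]
  constructor
  · intro hrt
    obtain ⟨r, hr, lam, hlam, α, hform⟩ := fwd n f hf hrt
    exact ⟨r, hr, lam, hlam, α, by rw [hform]; rfl⟩
  · rintro ⟨r, hr, lam, hlam, α, hform⟩
    rw [hform]
    exact Sop_form n r hr lam α

end RealTypeAux
end

section
/- If T = F(T₁,...,T_N) is a decomposition of a tensor T where F is an SO(3)-equivariant map and each T_k = κ_k(T) is a covariant of T (i.e. κ_k(g⋆T) = g⋆κ_k(T) for all g ∈ SO(3)), then the symmetry group of T equals the intersection of the symmetry groups of the T_k: G_T = ⋂_k G_{T_k}. -/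
open Matrix

/-- The rotation group `SO(3)`, as the monoid of real `3×3` matrices `g` with
`g gᵀ = 1` and `det g = 1`. -/
def SO3 : Submonoid (Matrix (Fin 3) (Fin 3) ℝ) where
  carrier := {g | g * gᵀ = 1 ∧ g.det = 1}
  one_mem' := by simp
  mul_mem' := by
    rintro a b ⟨ha1, ha2⟩ ⟨hb1, hb2⟩
    refine ⟨?_, ?_⟩
    · rw [Matrix.transpose_mul, mul_assoc, ← mul_assoc b, hb1, one_mul, ha1]
    · rw [Matrix.det_mul, ha2, hb2, one_mul]

/-- **Obstruction lemma**: if `T = F(T₁,…,T_N)` is an `SO(3)`-equivariant decomposition of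
`T` where each `T_k = κ_k(T)` is a covariant of `T`, then the symmetry group of `T` is the
intersection of the symmetry groups of the `T_k`. -/
theorem symmetry_group_of_equivariant_reconstruction
    (V : Type*) (N : ℕ) (W : Fin N → Type*)
    [MulAction SO3 V] [∀ k, MulAction SO3 (W k)]
    (F : (∀ k, W k) → V)
    (hF : ∀ (g : SO3) (T : ∀ k, W k), F (fun k => g • T k) = g • F T)
    (κ : ∀ k, V → W k)
    (hκ : ∀ (k) (g : SO3) (T : V), κ k (g • T) = g • κ k T)
    (T : V) (hdec : F (fun k => κ k T) = T) :
    {g : SO3 | g • T = T} = ⋂ k : Fin N, {g : SO3 | g • κ k T = κ k T} := by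
  ext g
  simp only [Set.mem_setOf_eq, Set.mem_iInter]
  constructor
  · intro h k
    rw [← hκ, h]
  · intro h
    calc g • T = g • F (fun k => κ k T) := by rw [hdec]
    _ = F (fun k => g • κ k T) := (hF g _).symm
    _ = F (fun k => κ k T) := by simp only [h]
    _ = T := hdec
end

section
/- The map sending a rotation to the induced conjugation on traceless Hermitian 2×2 matrices is well-defined: for γ ∈ SU(2), the map Ad_γ : M ↦ γMγ⁻¹ preserves the space of traceless Hermitian 2×2 matrices, preserves the quadratic form M ↦ −det M, and has determinant 1; the resulting group morphism π : SU(2) → SO(3) is surjective with kernel {±Id}. -/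
open Matrix Complex

/-- The special unitary group `SU(2)`, as the monoid of complex `2×2` matrices `γ` with
`γ*γ = 1` (where `γ*` is the conjugate transpose) and `det γ = 1`. -/
def SU2 : Submonoid (Matrix (Fin 2) (Fin 2) ℂ) where
  carrier := {γ | γᴴ * γ = 1 ∧ γ.det = 1}
  one_mem' := by simp
  mul_mem' := by
    rintro a b ⟨ha1, ha2⟩ ⟨hb1, hb2⟩
    refine ⟨?_, ?_⟩
    · rw [Matrix.conjTranspose_mul, mul_assoc, ← mul_assoc aᴴ, ha1, one_mul, hb1]
    · rw [Matrix.det_mul, ha2, hb2, one_mul]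

/-- The identification of `ℝ³` with traceless Hermitian `2×2` complex matrices,
`(x,y,z) ↦ [[−z, x+iy], [x−iy, z]]`. -/
noncomputable def Mmap (x : Fin 3 → ℝ) : Matrix (Fin 2) (Fin 2) ℂ :=
  !![-(x 2 : ℂ), (x 0 : ℂ) + (x 1 : ℂ) * Complex.I;
     (x 0 : ℂ) - (x 1 : ℂ) * Complex.I, (x 2 : ℂ)]

lemma SU2.inv_eq {γ : Matrix (Fin 2) (Fin 2) ℂ} (h : γ ∈ SU2) : γ⁻¹ = γᴴ :=
  Matrix.inv_eq_left_inv h.1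

lemma SU2.struct {γ : Matrix (Fin 2) (Fin 2) ℂ} (h : γ ∈ SU2) :
    ∃ a b : ℂ, γ = !![a, b; -(starRingEnd ℂ) b, (starRingEnd ℂ) a] ∧
      a.re^2 + a.im^2 + b.re^2 + b.im^2 = 1 := by
  obtain ⟨h1, h2⟩ := h
  have hinv : γᴴ = Ring.inverse γ.det • γ.adjugate := by
    rw [← Matrix.inv_def, Matrix.inv_eq_left_inv h1]
  rw [h2, Matrix.adjugate_fin_two, Ring.inverse_one, one_smul] at hinv
  have h00 : (starRingEnd ℂ) (γ 0 0) = γ 1 1 := by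
    have := congrFun (congrFun hinv 0) 0; simpa [Matrix.conjTranspose_apply] using this
  have h01 : (starRingEnd ℂ) (γ 1 0) = -γ 0 1 := by
    have := congrFun (congrFun hinv 0) 1; simpa [Matrix.conjTranspose_apply] using this
  have hb : γ 1 0 = -(starRingEnd ℂ) (γ 0 1) := by
    have := congrArg (starRingEnd ℂ) h01
    simpa [RingHom.map_neg] using this
  refine ⟨γ 0 0, γ 0 1, ?_, ?_⟩
  · rw [Matrix.eta_fin_two γ, hb, ← h00]; simp
  · have hdet := h2
    rw [Matrix.det_fin_two, hb, ← h00] at hdet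
    have : (γ 0 0).re^2 + (γ 0 0).im^2 + ((γ 0 1).re^2 + (γ 0 1).im^2) = 1 := by
      have := congrArg Complex.re hdet
      simpa [Complex.ext_iff, Complex.mul_re, Complex.mul_im, sq] using this
    linarith

lemma Mmap_inj {u v : Fin 3 → ℝ} (h : Mmap u = Mmap v) : u = v := by
  have h01 := congrFun (congrFun h 0) 1
  have h11 := congrFun (congrFun h 1) 1
  simp [Mmap] at h01 h11
  have h2 : u 2 = v 2 := by exact_mod_cast h11
  have h0 : u 0 = v 0 := by
    have := congrArg Complex.re h01; simpa using this
  have h1 : u 1 = v 1 := by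
    have := congrArg Complex.im h01; simpa using this
  funext i; fin_cases i <;> assumption

lemma Mmap_det (v : Fin 3 → ℝ) : (Mmap v).det = -((v 0)^2 + (v 1)^2 + (v 2)^2 : ℝ) := by
  simp [Mmap, Matrix.det_fin_two, Complex.ext_iff, ← Complex.ofReal_pow]
  constructor <;> ring

lemma Mmap_herm (v : Fin 3 → ℝ) : (Mmap v).IsHermitian := by
  rw [Matrix.IsHermitian]
  ext i j
  fin_cases i <;> fin_cases j <;>
    simp [Mmap, Matrix.conjTranspose_apply, Complex.ext_iff]

lemma Mmap_trace (v : Fin 3 → ℝ) : (Mmap v).trace = 0 := by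
  simp [Mmap, Matrix.trace_fin_two]

def rotMat (w x y z : ℝ) : Matrix (Fin 3) (Fin 3) ℝ :=
  !![w^2-x^2-y^2+z^2, -2*(w*x+y*z), 2*(w*y-x*z);
     2*(w*x-y*z), w^2-x^2+y^2-z^2, 2*(w*z+x*y);
     -2*(w*y+x*z), 2*(x*y-w*z), w^2+x^2-y^2-z^2]

lemma rotMat_transpose (w x y z : ℝ) :
    (rotMat w x y z)ᵀ = rotMat w (-x) (-y) (-z) := by
  ext i j
  fin_cases i <;> fin_cases j <;> · simp [rotMat, Matrix.transpose_apply]; try ring1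

lemma rotMat_orth {w x y z : ℝ} (hn : w^2+x^2+y^2+z^2 = 1) :
    rotMat w x y z * (rotMat w x y z)ᵀ = 1 := by
  rw [rotMat_transpose]
  ext i j
  fin_cases i <;> fin_cases j <;>
    · simp [rotMat, Matrix.mul_apply, Fin.sum_univ_succ, Matrix.one_apply]
      first
      | ring1
      | linear_combination (w^2+x^2+y^2+z^2+1) * hn

lemma rotMat_det {w x y z : ℝ} (hn : w^2+x^2+y^2+z^2 = 1) :
    (rotMat w x y z).det = 1 := by
  simp [rotMat, Matrix.det_fin_three]
  linear_combination ((w^2+x^2+y^2+z^2)^2 + (w^2+x^2+y^2+z^2) + 1) * hn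

def Rz (c s : ℝ) : Matrix (Fin 3) (Fin 3) ℝ := !![c, -s, 0; s, c, 0; 0, 0, 1]
def Ry (c s : ℝ) : Matrix (Fin 3) (Fin 3) ℝ := !![c, 0, s; 0, 1, 0; -s, 0, c]

lemma rotMat_z {w x : ℝ} (hn : w^2+x^2 = 1) : rotMat w x 0 0 = Rz (w^2-x^2) (2*w*x) := by
  ext i j
  fin_cases i <;> fin_cases j <;> · simp [rotMat, Rz]; try linarith

lemma rotMat_y {w y : ℝ} (hn : w^2+y^2 = 1) : rotMat w 0 y 0 = Ry (w^2-y^2) (2*w*y) := by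
  ext i j
  fin_cases i <;> fin_cases j <;> · simp [rotMat, Ry]; try linarith

lemma conj_Mmap (a b : ℂ) (v : Fin 3 → ℝ) :
    !![a, b; -(starRingEnd ℂ) b, (starRingEnd ℂ) a] * Mmap v *
      (!![a, b; -(starRingEnd ℂ) b, (starRingEnd ℂ) a])ᴴ =
    Mmap ((rotMat a.re a.im b.re b.im).mulVec v) := by
  ext i j
  fin_cases i <;> fin_cases j <;>
    · simp [Mmap, rotMat, Matrix.mulVec, Matrix.mul_apply, Fin.sum_univ_succ,
        dotProduct, Complex.ext_iff, Complex.add_re, Complex.add_im]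
      constructor <;> · simp [← Complex.ofReal_pow]; ring

noncomputable def piFun (γ : SU2) : Matrix (Fin 3) (Fin 3) ℝ :=
  rotMat ((γ : Matrix (Fin 2) (Fin 2) ℂ) 0 0).re ((γ : Matrix (Fin 2) (Fin 2) ℂ) 0 0).im
    ((γ : Matrix (Fin 2) (Fin 2) ℂ) 0 1).re ((γ : Matrix (Fin 2) (Fin 2) ℂ) 0 1).im

lemma piFun_eq {γ : SU2} {a b : ℂ}
    (hγ : (γ : Matrix (Fin 2) (Fin 2) ℂ) = !![a, b; -(starRingEnd ℂ) b, (starRingEnd ℂ) a]) :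
    piFun γ = rotMat a.re a.im b.re b.im := by
  rw [piFun, hγ]; simp

lemma piFun_conj (γ : SU2) (v : Fin 3 → ℝ) :
    (γ : Matrix (Fin 2) (Fin 2) ℂ) * Mmap v * (γ : Matrix (Fin 2) (Fin 2) ℂ)ᴴ =
    Mmap ((piFun γ).mulVec v) := by
  obtain ⟨a, b, hγ, hn⟩ := SU2.struct γ.2
  rw [piFun_eq hγ, hγ, conj_Mmap]

lemma piFun_norm (γ : SU2) :
    ∃ w x y z : ℝ, w^2+x^2+y^2+z^2 = 1 ∧ piFun γ = rotMat w x y z := by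
  obtain ⟨a, b, hγ, hn⟩ := SU2.struct γ.2
  exact ⟨a.re, a.im, b.re, b.im, hn, piFun_eq hγ⟩

lemma matrix_ext_of_mulVec {A B : Matrix (Fin 3) (Fin 3) ℝ}
    (h : ∀ v, A.mulVec v = B.mulVec v) : A = B := by
  ext i j
  have := congrFun (h (Pi.single j 1)) i
  simpa [Matrix.mulVec_single] using this

lemma piFun_mul (γ δ : SU2) : piFun (γ * δ) = piFun γ * piFun δ := by
  apply matrix_ext_of_mulVec
  intro v
  apply Mmap_inj
  rw [← Matrix.mulVec_mulVec, ← piFun_conj, ← piFun_conj, ← piFun_conj]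
  push_cast
  rw [Matrix.conjTranspose_mul]
  simp [mul_assoc]

lemma piFun_one : piFun 1 = 1 := by
  have h1 : ((1 : SU2) : Matrix (Fin 2) (Fin 2) ℂ) = !![1, 0; -(starRingEnd ℂ) 0, (starRingEnd ℂ) 1] := by
    simp [Matrix.eta_fin_two (1 : Matrix (Fin 2) (Fin 2) ℂ), Matrix.one_apply]
  rw [piFun_eq h1]
  ext i j
  fin_cases i <;> fin_cases j <;> simp [rotMat, Matrix.one_apply, Matrix.vecHead, Matrix.vecTail]

noncomputable def piHom : SU2 →* Matrix (Fin 3) (Fin 3) ℝ where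
  toFun := piFun
  map_one' := piFun_one
  map_mul' := piFun_mul

lemma exists_half {c s : ℝ} (h : c^2 + s^2 = 1) :
    ∃ w x : ℝ, w^2 + x^2 = 1 ∧ w^2 - x^2 = c ∧ 2*w*x = s := by
  by_cases hc : c = -1
  · refine ⟨0, 1, by norm_num, by norm_num [hc], by nlinarith⟩
  · have hge : -1 ≤ c := by nlinarith [sq_nonneg (c+1), sq_nonneg s]
    have h1c : 0 < 1 + c := lt_of_le_of_ne (by linarith) (fun h0 => hc (by linarith))
    set w := Real.sqrt ((1+c)/2) with hw
    have hw2 : w^2 = (1+c)/2 := Real.sq_sqrt (by linarith)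
    have hw0 : w ≠ 0 := by
      intro h0; rw [h0] at hw2; simp at hw2; linarith
    refine ⟨w, s/(2*w), ?_, ?_, ?_⟩
    · have : (s/(2*w))^2 = (1-c)/2 := by
        rw [div_pow]
        rw [div_eq_iff (by positivity)]
        have : (2*w)^2 = 2*(1+c) := by rw [mul_pow, hw2]; ring
        rw [this]
        nlinarith
      rw [this, hw2]; ring
    · have : (s/(2*w))^2 = (1-c)/2 := by
        rw [div_pow]
        rw [div_eq_iff (by positivity)]
        have : (2*w)^2 = 2*(1+c) := by rw [mul_pow, hw2]; ring
        rw [this]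
        nlinarith
      rw [this, hw2]; ring
    · field_simp

lemma exists_SU2_Rz {c s : ℝ} (h : c^2 + s^2 = 1) : ∃ γ : SU2, piFun γ = Rz c s := by
  obtain ⟨w, x, hn, hc, hs⟩ := exists_half h
  set a : ℂ := ⟨w, x⟩ with ha
  have hmem : !![a, 0; -(starRingEnd ℂ) 0, (starRingEnd ℂ) a] ∈ SU2 := by
    constructor
    · ext i j
      fin_cases i <;> fin_cases j <;>
        · simp [Matrix.mul_apply, Matrix.conjTranspose_apply, Fin.sum_univ_succ,
            Matrix.one_apply, Complex.ext_iff, Complex.mul_re, Complex.mul_im, ha]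
          try first
          | ring1
          | linear_combination hn
          | constructor <;> first | ring1 | linear_combination hn
    · simp [Matrix.det_fin_two, Complex.ext_iff, Complex.mul_re, Complex.mul_im, ha]
      first
      | constructor <;> first | ring1 | linear_combination hn
      | linear_combination hn
  refine ⟨⟨_, hmem⟩, ?_⟩
  have hform : ((⟨_, hmem⟩ : SU2) : Matrix (Fin 2) (Fin 2) ℂ) =
      !![a, (0:ℂ); -(starRingEnd ℂ) 0, (starRingEnd ℂ) a] := rfl
  rw [piFun_eq hform]
  have : (0:ℂ).re = 0 := rfl
  rw [show a.re = w from rfl, show a.im = x from rfl, this, show (0:ℂ).im = 0 from rfl,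
    rotMat_z hn, hc, hs]

lemma exists_SU2_Ry {c s : ℝ} (h : c^2 + s^2 = 1) : ∃ γ : SU2, piFun γ = Ry c s := by
  obtain ⟨w, y, hn, hc, hs⟩ := exists_half h
  have hmem : !![(w:ℂ), (y:ℂ); -(starRingEnd ℂ) (y:ℂ), (starRingEnd ℂ) (w:ℂ)] ∈ SU2 := by
    constructor
    · ext i j
      fin_cases i <;> fin_cases j <;>
        · simp [Matrix.mul_apply, Matrix.conjTranspose_apply, Fin.sum_univ_succ,
            Matrix.one_apply, Complex.ext_iff, Complex.mul_re, Complex.mul_im]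
          try first
          | ring1
          | linear_combination hn
          | constructor <;> first | ring1 | linear_combination hn
    · simp [Matrix.det_fin_two, Complex.ext_iff, Complex.mul_re, Complex.mul_im]
      first
      | constructor <;> first | ring1 | linear_combination hn
      | linear_combination hn
  refine ⟨⟨_, hmem⟩, ?_⟩
  have hform : ((⟨_, hmem⟩ : SU2) : Matrix (Fin 2) (Fin 2) ℂ) =
      !![(w:ℂ), (y:ℂ); -(starRingEnd ℂ) (y:ℂ), (starRingEnd ℂ) (w:ℂ)] := rfl
  rw [piFun_eq hform]
  simp only [Complex.ofReal_re, Complex.ofReal_im]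
  rw [rotMat_y hn, hc, hs]

lemma Rz_transpose (c s : ℝ) : (Rz c s)ᵀ = Rz c (-s) := by
  ext i j
  fin_cases i <;> fin_cases j <;> · simp [Rz, Matrix.transpose_apply]

lemma Ry_transpose (c s : ℝ) : (Ry c s)ᵀ = Ry c (-s) := by
  ext i j
  fin_cases i <;> fin_cases j <;> · simp [Ry, Matrix.transpose_apply]

lemma Rz_orth {c s : ℝ} (h : c^2+s^2 = 1) : Rz c s * (Rz c s)ᵀ = 1 := by
  rw [Rz_transpose]
  ext i j
  fin_cases i <;> fin_cases j <;>
    · simp [Rz, Matrix.mul_apply, Fin.sum_univ_three, Matrix.one_apply]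
      try first | ring1 | linear_combination h

lemma Ry_orth {c s : ℝ} (h : c^2+s^2 = 1) : Ry c s * (Ry c s)ᵀ = 1 := by
  rw [Ry_transpose]
  ext i j
  fin_cases i <;> fin_cases j <;>
    · simp [Ry, Matrix.mul_apply, Fin.sum_univ_three, Matrix.one_apply]
      try first | ring1 | linear_combination h

lemma Rz_det {c s : ℝ} (h : c^2+s^2 = 1) : (Rz c s).det = 1 := by
  simp [Rz, Matrix.det_fin_three]
  linear_combination h

lemma Ry_det {c s : ℝ} (h : c^2+s^2 = 1) : (Ry c s).det = 1 := by
  simp [Ry, Matrix.det_fin_three]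
  linear_combination h

lemma euler {g : Matrix (Fin 3) (Fin 3) ℝ} (h1 : g * gᵀ = 1) (h2 : g.det = 1) :
    ∃ c1 s1 c2 s2 c3 s3 : ℝ, c1^2+s1^2 = 1 ∧ c2^2+s2^2 = 1 ∧ c3^2+s3^2 = 1 ∧
      g = Rz c1 s1 * Ry c2 s2 * Rz c3 s3 := by
  have h1' : gᵀ * g = 1 := mul_eq_one_comm.mp h1
  have hcol : g 0 2^2 + g 1 2^2 + g 2 2^2 = 1 := by
    have := congrFun (congrFun h1' 2) 2
    simp [Matrix.mul_apply, Matrix.transpose_apply, Fin.sum_univ_three,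
      Matrix.one_apply] at this
    linear_combination this
  set cb := g 2 2 with hcb
  set sb := Real.sqrt (g 0 2^2 + g 1 2^2) with hsb
  have hsb2 : sb^2 = g 0 2^2 + g 1 2^2 := Real.sq_sqrt (by positivity)
  have hb : cb^2 + sb^2 = 1 := by rw [hsb2]; linarith
  obtain ⟨ca, sa, ha, ha0, ha1⟩ :
      ∃ ca sa : ℝ, ca^2+sa^2 = 1 ∧ ca*sb = g 0 2 ∧ sa*sb = g 1 2 := by
    by_cases hs0 : sb = 0
    · have hz : g 0 2^2 + g 1 2^2 = 0 := by rw [← hsb2, hs0]; ring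
      have e0 : g 0 2 = 0 := by nlinarith [sq_nonneg (g 0 2), sq_nonneg (g 1 2)]
      have e1 : g 1 2 = 0 := by nlinarith [sq_nonneg (g 0 2), sq_nonneg (g 1 2)]
      exact ⟨1, 0, by norm_num, by rw [hs0]; simp [e0], by rw [hs0]; simp [e1]⟩
    · refine ⟨g 0 2 / sb, g 1 2 / sb, ?_, by field_simp, by field_simp⟩
      field_simp
      linarith [hsb2]
  set A := Rz ca sa * Ry cb sb with hA
  have hAorth : A * Aᵀ = 1 := by
    rw [hA, Matrix.transpose_mul,
      show (Rz ca sa * Ry cb sb) * ((Ry cb sb)ᵀ * (Rz ca sa)ᵀ) =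
        Rz ca sa * (Ry cb sb * (Ry cb sb)ᵀ) * (Rz ca sa)ᵀ by
          simp [Matrix.mul_assoc],
      Ry_orth hb, mul_one, Rz_orth ha]
  have hAo' : Aᵀ * A = 1 := mul_eq_one_comm.mp hAorth
  have hAdet : A.det = 1 := by rw [hA, Matrix.det_mul, Rz_det ha, Ry_det hb, mul_one]
  have hA3 : ∀ i, A i 2 = g i 2 := by
    intro i
    fin_cases i <;>
      · simp [hA, Rz, Ry, Matrix.mul_apply, Fin.sum_univ_three]
        try first | linarith [ha0] | linarith [ha1]
  set B := Aᵀ * g with hB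
  have hg : A * B = g := by rw [hB, ← Matrix.mul_assoc, hAorth, one_mul]
  have hBBT : B * Bᵀ = 1 := by
    have e : B * Bᵀ = Aᵀ * (g * gᵀ) * A := by
      rw [hB]; simp [Matrix.transpose_mul, Matrix.transpose_transpose, Matrix.mul_assoc]
    rw [e, h1, mul_one, hAo']
  have hTB : Bᵀ * B = 1 := mul_eq_one_comm.mp hBBT
  have hBdet : B.det = 1 := by
    rw [hB, Matrix.det_mul, Matrix.det_transpose, hAdet, h2, mul_one]
  have h02 : B 0 2 = 0 := by
    have hAA := congrFun (congrFun hAo' 0) 2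
    simp [Matrix.mul_apply, Matrix.transpose_apply, Fin.sum_univ_three,
      Matrix.one_apply] at hAA
    simp [hB, Matrix.mul_apply, Matrix.transpose_apply, Fin.sum_univ_three, ← hA3]
    linarith [hAA]
  have h12 : B 1 2 = 0 := by
    have hAA := congrFun (congrFun hAo' 1) 2
    simp [Matrix.mul_apply, Matrix.transpose_apply, Fin.sum_univ_three,
      Matrix.one_apply] at hAA
    simp [hB, Matrix.mul_apply, Matrix.transpose_apply, Fin.sum_univ_three, ← hA3]
    linarith [hAA]
  have h22 : B 2 2 = 1 := by
    have hAA := congrFun (congrFun hAo' 2) 2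
    simp [Matrix.mul_apply, Matrix.transpose_apply, Fin.sum_univ_three,
      Matrix.one_apply] at hAA
    simp [hB, Matrix.mul_apply, Matrix.transpose_apply, Fin.sum_univ_three, ← hA3]
    linarith [hAA]
  have h20 : B 2 0 = 0 := by
    have e := congrFun (congrFun hTB 0) 2
    simp [Matrix.mul_apply, Matrix.transpose_apply, Fin.sum_univ_three,
      Matrix.one_apply, h02, h12, h22] at e
    linarith [e]
  have h21 : B 2 1 = 0 := by
    have e := congrFun (congrFun hTB 1) 2
    simp [Matrix.mul_apply, Matrix.transpose_apply, Fin.sum_univ_three,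
      Matrix.one_apply, h02, h12, h22] at e
    linarith [e]
  have e00 := congrFun (congrFun hTB 0) 0
  have e01 := congrFun (congrFun hTB 0) 1
  simp [Matrix.mul_apply, Matrix.transpose_apply, Fin.sum_univ_three,
    Matrix.one_apply, h20, h21] at e00 e01
  rw [Matrix.det_fin_three] at hBdet
  rw [h02, h12, h22, h20, h21] at hBdet
  have hs : B 1 1 = B 0 0 := by
    linear_combination (B 0 0) * hBdet + (B 1 0) * e01 - (B 1 1) * e00
  have hq : B 0 1 = -(B 1 0) := by
    linear_combination (B 0 0) * e01 - (B 1 0) * hBdet - (B 0 1) * e00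
  have hnorm : (B 0 0)^2 + (B 1 0)^2 = 1 := by linear_combination e00
  have hRz : B = Rz (B 0 0) (B 1 0) := by
    ext i j
    fin_cases i <;> fin_cases j <;>
      simp [Rz, h02, h12, h22, h20, h21, hs, hq]
  refine ⟨ca, sa, cb, sb, B 0 0, B 1 0, ha, hb, hnorm, ?_⟩
  rw [← hg, hA]
  exact congrArg (fun M => Rz ca sa * Ry cb sb * M) hRz

lemma piFun_eq_one_iff (γ : SU2) : piFun γ = 1 ↔
    ((γ : Matrix (Fin 2) (Fin 2) ℂ) = 1 ∨ (γ : Matrix (Fin 2) (Fin 2) ℂ) = -1) := by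
  constructor
  · intro h
    obtain ⟨a, b, hγ, hn⟩ := SU2.struct γ.2
    rw [piFun_eq hγ] at h
    have h00 := congrFun (congrFun h 0) 0
    have h11 := congrFun (congrFun h 1) 1
    simp [rotMat, Matrix.one_apply] at h00 h11
    have hx : a.im = 0 := by nlinarith [sq_nonneg a.im, sq_nonneg b.re, sq_nonneg b.im]
    have hy : b.re = 0 := by nlinarith [sq_nonneg a.im, sq_nonneg b.re, sq_nonneg b.im]
    have hz : b.im = 0 := by nlinarith [sq_nonneg a.im, sq_nonneg b.re, sq_nonneg b.im]
    have hB : b = 0 := Complex.ext (by simp [hy]) (by simp [hz])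
    have hw : a.re = 1 ∨ a.re = -1 := by
      have h0 : (a.re - 1) * (a.re + 1) = 0 := by nlinarith
      rcases mul_eq_zero.mp h0 with h' | h'
      · left; linarith
      · right; linarith
    rcases hw with hw | hw
    · left
      have hA : a = 1 := Complex.ext (by simp [hw]) (by simp [hx])
      rw [hγ, hA, hB]
      ext i j; fin_cases i <;> fin_cases j <;> simp [Matrix.one_apply]
    · right
      have hA : a = -1 := Complex.ext (by simp [hw]) (by simp [hx])
      rw [hγ, hA, hB]
      ext i j; fin_cases i <;> fin_cases j <;> simp [Matrix.one_apply]
  · rintro (h | h)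
    · have hγ1 : γ = 1 := Subtype.ext h
      rw [hγ1, piFun_one]
    · rw [piFun, h]
      have e00 : ((-1 : Matrix (Fin 2) (Fin 2) ℂ) 0 0) = -1 := by
        simp [Matrix.one_apply]
      have e01 : ((-1 : Matrix (Fin 2) (Fin 2) ℂ) 0 1) = 0 := by
        simp [Matrix.one_apply]
      rw [e00, e01]
      ext i j
      fin_cases i <;> fin_cases j <;>
        simp [rotMat, Matrix.one_apply, Matrix.vecHead, Matrix.vecTail]


/-- **The double cover `SU(2) → SO(3)`**: for `γ ∈ SU(2)`, `Ad_γ : M ↦ γ M γ⁻¹` preserves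
traceless Hermitian `2×2` matrices and the quadratic form `M ↦ −det M`; under the
identification of `ℝ³` with traceless Hermitian matrices it induces a rotation, and the
resulting group morphism `π : SU(2) → SO(3)` is surjective with kernel `{±1}`. -/
theorem su2_to_so3_double_cover :
    (∀ γ : SU2, ∀ M : Matrix (Fin 2) (Fin 2) ℂ, M.IsHermitian → M.trace = 0 →
      ((γ : Matrix (Fin 2) (Fin 2) ℂ) * M * (γ : Matrix (Fin 2) (Fin 2) ℂ)⁻¹).IsHermitian ∧
        ((γ : Matrix (Fin 2) (Fin 2) ℂ) * M * (γ : Matrix (Fin 2) (Fin 2) ℂ)⁻¹).trace = 0 ∧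
        ((γ : Matrix (Fin 2) (Fin 2) ℂ) * M * (γ : Matrix (Fin 2) (Fin 2) ℂ)⁻¹).det = M.det) ∧
    ∃ π : SU2 →* Matrix (Fin 3) (Fin 3) ℝ,
      (∀ γ : SU2, (π γ) * (π γ)ᵀ = 1 ∧ (π γ).det = 1) ∧
      (∀ (γ : SU2) (x : Fin 3 → ℝ),
        Mmap ((π γ).mulVec x) =
          (γ : Matrix (Fin 2) (Fin 2) ℂ) * Mmap x * (γ : Matrix (Fin 2) (Fin 2) ℂ)⁻¹) ∧
      (∀ g : Matrix (Fin 3) (Fin 3) ℝ, g * gᵀ = 1 → g.det = 1 → ∃ γ : SU2, π γ = g) ∧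
      (∀ γ : SU2, π γ = 1 ↔
        ((γ : Matrix (Fin 2) (Fin 2) ℂ) = 1 ∨ (γ : Matrix (Fin 2) (Fin 2) ℂ) = -1)) := by
  constructor
  · intro γ M hM htr
    rw [SU2.inv_eq γ.2]
    refine ⟨?_, ?_, ?_⟩
    · show ((γ : Matrix (Fin 2) (Fin 2) ℂ) * M * (γ : Matrix (Fin 2) (Fin 2) ℂ)ᴴ)ᴴ = _
      simp [Matrix.conjTranspose_mul, hM.eq, Matrix.mul_assoc]
    · rw [Matrix.trace_mul_cycle, γ.2.1, one_mul, htr]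
    · rw [Matrix.det_mul, Matrix.det_mul, γ.2.2, Matrix.det_conjTranspose, γ.2.2]
      simp
  · refine ⟨piHom, ?_, ?_, ?_, ?_⟩
    · intro γ
      obtain ⟨w, x, y, z, hn, he⟩ := piFun_norm γ
      show piFun γ * (piFun γ)ᵀ = 1 ∧ (piFun γ).det = 1
      rw [he]
      exact ⟨rotMat_orth hn, rotMat_det hn⟩
    · intro γ x
      rw [SU2.inv_eq γ.2]
      exact (piFun_conj γ x).symm
    · intro g hg1 hg2
      obtain ⟨c1, s1, c2, s2, c3, s3, h1, h2, h3, hg⟩ := euler hg1 hg2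
      obtain ⟨γ1, hγ1⟩ := exists_SU2_Rz h1
      obtain ⟨γ2, hγ2⟩ := exists_SU2_Ry h2
      obtain ⟨γ3, hγ3⟩ := exists_SU2_Rz h3
      refine ⟨γ1 * γ2 * γ3, ?_⟩
      show piFun (γ1 * γ2 * γ3) = g
      rw [piFun_mul, piFun_mul, hγ1, hγ2, hγ3, hg]
    · exact piFun_eq_one_iff
end

section
/- If a nonzero vector w ∈ ℝ³ is written as w = t·w⁰ with t = ‖w‖ and w⁰ a unit vector with w⁰ ≠ (0,0,1), then the binary form associated (via the Cartan map) to the linear form x ↦ w·x factors as ψ(w·x)(u,v) = t·α·(u + λv)(λ̄u − v), where λ = τ(w⁰) is the stereographic projection of w⁰ from the north pole and α = 1/(|λ|²+1). -/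
open Complex

/-!
Both sides are linear in `w`, so it suffices to treat the unit vector `w⁰ = (a, b, c)`.
Expanding, `(1 - c)/2 · (u + λv)(λ̄u - v)` has coefficients `(1 - c)λ̄/2 = (a - ib)/2` at `u²`,
`-(1 - c)λ/2 = -(a + ib)/2` at `v²` and `(1 - c)(|λ|² - 1)/2 = c` at `uv`, the last because
`|λ|² = (1 - c²)/(1 - c)² = (1 + c)/(1 - c)` on the unit sphere. The same value
`|λ|² + 1 = 2/(1 - c)` identifies `α` with `(1 - c)/2`.
-/

/-- `ψ(w·x)(u, v)`, the Cartan map applied to the linear form `x ↦ w·x`. -/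
noncomputable def cartanLinear (w : Fin 3 → ℝ) (u v : ℂ) : ℂ :=
  w 0 * ((u ^ 2 - v ^ 2) / 2) + w 1 * ((u ^ 2 + v ^ 2) / (2 * I)) + w 2 * (u * v)

/-- Stereographic projection from the north pole `(0, 0, 1)`. -/
noncomputable def stereographicProj (w : Fin 3 → ℝ) : ℂ :=
  (w 0 + w 1 * I) / (1 - w 2)

lemma cartanLinear_smul (t : ℝ) (w : Fin 3 → ℝ) (u v : ℂ) :
    cartanLinear (t • w) u v = t * cartanLinear w u v := by
  simp only [cartanLinear, Pi.smul_apply, smul_eq_mul, ofReal_mul]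
  ring

lemma coord_two_ne_one_of_ne_north_pole {w : Fin 3 → ℝ}
    (hunit : w 0 ^ 2 + w 1 ^ 2 + w 2 ^ 2 = 1) (hnp : w ≠ ![0, 0, 1]) : w 2 ≠ 1 := by
  intro h2
  have h0 : w 0 = 0 := by nlinarith [sq_nonneg (w 0), sq_nonneg (w 1)]
  have h1 : w 1 = 0 := by nlinarith [sq_nonneg (w 0), sq_nonneg (w 1)]
  exact hnp (funext fun i => by fin_cases i <;> simp [h0, h1, h2])

lemma normSq_stereographicProj_add_one {w : Fin 3 → ℝ}
    (hunit : w 0 ^ 2 + w 1 ^ 2 + w 2 ^ 2 = 1) (h2 : w 2 ≠ 1) :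
    normSq (stereographicProj w) + 1 = 2 / (1 - w 2) := by
  have hc : 1 - w 2 ≠ 0 := sub_ne_zero.mpr (Ne.symm h2)
  have hden : (1 : ℂ) - w 2 = ((1 - w 2 : ℝ) : ℂ) := by push_cast; rfl
  rw [stereographicProj, normSq_div, normSq_add_mul_I, hden, normSq_ofReal]
  field_simp
  linear_combination hunit

lemma conj_stereographicProj (w : Fin 3 → ℝ) :
    starRingEnd ℂ (stereographicProj w) = (w 0 - w 1 * I) / (1 - w 2) := by
  simp only [stereographicProj, map_div₀, map_add, map_sub, map_mul, map_one, conj_ofReal,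
    conj_I]
  ring

lemma cartanLinear_eq_of_unit {w : Fin 3 → ℝ}
    (hunit : w 0 ^ 2 + w 1 ^ 2 + w 2 ^ 2 = 1) (h2 : w 2 ≠ 1) (u v : ℂ) :
    cartanLinear w u v = ((1 - w 2) / 2 : ℝ) * (u + stereographicProj w * v) *
      (starRingEnd ℂ (stereographicProj w) * u - v) := by
  have hc : (1 : ℂ) - w 2 ≠ 0 := sub_ne_zero.mpr (mod_cast Ne.symm h2)
  have hunitC : (w 0 : ℂ) ^ 2 + (w 1 : ℂ) ^ 2 + (w 2 : ℂ) ^ 2 = 1 := mod_cast hunit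
  rw [cartanLinear, conj_stereographicProj, stereographicProj]
  push_cast
  field_simp
  linear_combination (-(I * u * v)) * hunitC +
    (u * v * I * (w 1 : ℂ) ^ 2 + (w 1 : ℂ) * (1 - w 2) * (u ^ 2 + v ^ 2)) * I_sq

theorem cartan_map_of_linear_form_general (w w0 : Fin 3 → ℝ) (t : ℝ)
    (hw0 : ∀ i, w i = t * w0 i)
    (hunit : w0 0 ^ 2 + w0 1 ^ 2 + w0 2 ^ 2 = 1)
    (hnp : w0 ≠ ![0, 0, 1])
    (lam : ℂ)
    (hlam : lam = ((w0 0 : ℂ) + (w0 1 : ℂ) * Complex.I) / (1 - (w0 2 : ℂ)))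
    (alpha : ℝ) (halpha : alpha = 1 / (Complex.normSq lam + 1)) :
    ∀ u v : ℂ,
      (w 0 : ℂ) * ((u ^ 2 - v ^ 2) / 2) + (w 1 : ℂ) * ((u ^ 2 + v ^ 2) / (2 * Complex.I)) +
          (w 2 : ℂ) * (u * v) =
        (t : ℂ) * (alpha : ℂ) * (u + lam * v) * (starRingEnd ℂ lam * u - v) := by
  intro u v
  have h2 : w0 2 ≠ 1 := coord_two_ne_one_of_ne_north_pole hunit hnp
  have hw : w = t • w0 := funext hw0
  have hlam' : lam = stereographicProj w0 := hlam
  have halpha' : alpha = (1 - w0 2) / 2 := by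
    rw [halpha, hlam', normSq_stereographicProj_add_one hunit h2, one_div_div]
  change cartanLinear w u v = _
  rw [hw, cartanLinear_smul, cartanLinear_eq_of_unit hunit h2, halpha', hlam']
  ring

/-- **Binary form of a linear form via the Cartan map and stereographic projection**:
if `w = t w⁰` with `t = ‖w‖`, `w⁰` a unit vector, `w⁰ ≠ (0,0,1)`, then the binary form
`ψ(w·x)(u,v) = w·((u²−v²)/2, (u²+v²)/(2i), uv)` associated to the linear form `x ↦ w·x`
factors as `t α (u + λv)(λ̄u − v)`, where `λ = τ(w⁰)` is the stereographic projection of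
`w⁰` from the north pole and `α = 1/(|λ|² + 1)`. -/
theorem cartan_map_of_linear_form (w w0 : Fin 3 → ℝ) (t : ℝ)
    (ht : t = Real.sqrt (w 0 ^ 2 + w 1 ^ 2 + w 2 ^ 2))
    (hw0 : ∀ i, w i = t * w0 i)
    (hunit : w0 0 ^ 2 + w0 1 ^ 2 + w0 2 ^ 2 = 1)
    (hnp : w0 ≠ ![0, 0, 1])
    (lam : ℂ)
    (hlam : lam = ((w0 0 : ℂ) + (w0 1 : ℂ) * Complex.I) / (1 - (w0 2 : ℂ)))
    (alpha : ℝ) (halpha : alpha = 1 / (Complex.normSq lam + 1)) :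
    ∀ u v : ℂ,
      (w 0 : ℂ) * ((u ^ 2 - v ^ 2) / 2) + (w 1 : ℂ) * ((u ^ 2 + v ^ 2) / (2 * Complex.I)) +
          (w 2 : ℂ) * (u * v) =
        (t : ℂ) * (alpha : ℂ) * (u + lam * v) * (starRingEnd ℂ lam * u - v) :=
  cartan_map_of_linear_form_general w w0 t hw0 hunit hnp lam hlam alpha halpha
end
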